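/- Let A* and Â be real m×n matrices with rank(A*) = r, and let P be a best rank-r approximation of Â in spectral norm with rank(P) = r. Then ‖(A*)† − P†‖₂ ≤ 6 ‖(A*)†‖₂ ‖P†‖₂ ‖A* − Â‖₂. -/

import Mathlib

open Matrix MeasureTheory ProbabilityTheory

noncomputable def specNorm {m n : ℕ} (A : Matrix (Fin m) (Fin n) ℝ) : ℝ :=
  ‖LinearMap.toContinuousLinearMap (Matrix.toEuclideanLin A)‖

noncomputable def frobNorm {m n : ℕ} (A : Matrix (Fin m) (Fin n) ℝ) : ℝ :=
  Real.sqrt (∑ i, ∑ j, (A i j) ^ 2)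

/-- The column space (range) of a real matrix. -/
def colSpace {m n : ℕ} (A : Matrix (Fin m) (Fin n) ℝ) : Submodule ℝ (Fin m → ℝ) :=
  LinearMap.range A.mulVecLin

/-- `G` is the Moore-Penrose pseudoinverse of `A`. -/
def IsMPInv {m n : ℕ} (A : Matrix (Fin m) (Fin n) ℝ) (G : Matrix (Fin n) (Fin m) ℝ) : Prop :=
  A * G * A = A ∧ G * A * G = G ∧ (A * G)ᵀ = A * G ∧ (G * A)ᵀ = G * A

/-!
Write `A = A*`, `B = P` and `G`, `H` for their pseudoinverses. Since `A` has rank `r`, optimality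
of `P` gives `‖A - B‖ ≤ ‖A - Â‖ + ‖Â - P‖ ≤ 2‖A - Â‖`, so it suffices to prove the perturbation
bound `‖G - H‖ ≤ 3‖G‖‖H‖‖A - B‖` for matrices of equal rank. It comes from the identity
`G - H = H(B - A)G - H(1 - AG) + (1 - HB)G`: the last two terms are controlled through
`‖BH(1 - AG)‖ ≤ ‖AG(1 - BH)‖ = ‖(1 - BH)(A - B)G‖`, an inequality between the orthogonal
projections `AG` and `BH`, which have the same rank. For projections `p`, `q` of equal finite
rank with `x = ‖p(1 - q)‖ < 1`, `q` is bounded below by `√(1 - x²)` on the range of `p`, hence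
maps it onto the range of `q`; self-adjointness then transfers the same lower bound to `p` on the
range of `q`, which is `‖q(1 - p)‖ ≤ x`.
-/

open Module
open scoped RealInnerProductSpace

theorem LinearMap.map_eq_range_of_disjoint_ker {K V W : Type*} [DivisionRing K] [AddCommGroup V]
    [Module K V] [AddCommGroup W] [Module K W] {f : V →ₗ[K] W} {S : Submodule K V}
    [FiniteDimensional K (LinearMap.range f)] (hdisj : Disjoint S (LinearMap.ker f))
    (hrank : finrank K S = finrank K (LinearMap.range f)) : S.map f = LinearMap.range f := by
  refine Submodule.eq_of_le_of_finrank_eq LinearMap.map_le_range ?_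
  rw [← hrank, ← LinearMap.range_domRestrict]
  exact LinearMap.finrank_range_of_inj (LinearMap.injective_domRestrict_iff.mpr hdisj)

theorem IsSelfAdjoint.norm_mul_comm {R : Type*} [NonUnitalNormedRing R] [StarRing R]
    [NormedStarGroup R] {a b : R} (ha : IsSelfAdjoint a) (hb : IsSelfAdjoint b) :
    ‖a * b‖ = ‖b * a‖ := by
  rw [← norm_star, star_mul, ha.star_eq, hb.star_eq]

namespace IsStarProjection

variable {E : Type*} [NormedAddCommGroup E] [InnerProductSpace ℝ E] [CompleteSpace E]
  {p q : E →L[ℝ] E}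

theorem apply_apply (hp : IsStarProjection p) (x : E) : p (p x) = p x :=
  DFunLike.congr_fun hp.isIdempotentElem.eq x

theorem inner_apply_left (hp : IsStarProjection p) (x y : E) : ⟪p x, y⟫ = ⟪x, p y⟫ :=
  hp.isSelfAdjoint.isSymmetric x y

theorem apply_eq_self_of_mem_range (hp : IsStarProjection p) {x : E} (hx : x ∈ p.range) :
    p x = x := by
  obtain ⟨y, rfl⟩ := hx
  exact hp.apply_apply y

theorem norm_apply_sq_add_norm_sub_apply_sq (hp : IsStarProjection p) (x : E) :
    ‖p x‖ ^ 2 + ‖x - p x‖ ^ 2 = ‖x‖ ^ 2 := by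
  have horth : ⟪p x, x - p x⟫ = 0 := by
    rw [inner_sub_right, ← hp.inner_apply_left, hp.apply_apply, real_inner_comm, sub_self]
  have := norm_add_sq_real (p x) (x - p x)
  rw [add_sub_cancel, horth] at this
  linarith

theorem norm_sub_apply_le_iff (hp : IsStarProjection p) (x : E) {t : ℝ} (ht : 0 ≤ t) :
    ‖x - p x‖ ≤ t * ‖x‖ ↔ (1 - t ^ 2) * ‖x‖ ^ 2 ≤ ‖p x‖ ^ 2 := by
  rw [← sq_le_sq₀ (norm_nonneg _) (by positivity)]
  have := hp.norm_apply_sq_add_norm_sub_apply_sq x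
  constructor <;> intro h <;> nlinarith

theorem mul_norm_sq_le_of_finrank_range_eq [FiniteDimensional ℝ E]
    (hp : IsStarProjection p) (hq : IsStarProjection q)
    (hrank : finrank ℝ p.range = finrank ℝ q.range) {c : ℝ} (hc : 0 < c)
    (hpq : ∀ u ∈ p.range, c * ‖u‖ ^ 2 ≤ ‖q u‖ ^ 2) {v : E} (hv : v ∈ q.range) :
    c * ‖v‖ ^ 2 ≤ ‖p v‖ ^ 2 := by
  have hdisj : Disjoint p.range (LinearMap.ker (q : E →ₗ[ℝ] E)) := by
    refine LinearMap.disjoint_ker.mpr fun u hu hqu => ?_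
    have := hpq u hu
    rw [ContinuousLinearMap.coe_coe] at hqu
    rw [hqu, norm_zero, zero_pow two_ne_zero, ← mul_zero c] at this
    simpa using le_of_mul_le_mul_left this hc
  obtain ⟨u, hu, rfl⟩ : v ∈ p.range.map (q : E →ₗ[ℝ] E) := by
    rwa [LinearMap.map_eq_range_of_disjoint_ker hdisj hrank]
  have hcu := hpq u hu
  have hinner : ‖q u‖ ^ 2 ≤ ‖p (q u)‖ * ‖u‖ :=
    calc ‖q u‖ ^ 2 = ⟪q (q u), u⟫ := by
          rw [hq.inner_apply_left, real_inner_self_eq_norm_sq]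
      _ = ⟪q u, p u⟫ := by rw [hq.apply_apply, hp.apply_eq_self_of_mem_range hu]
      _ = ⟪p (q u), u⟫ := (hp.inner_apply_left _ _).symm
      _ ≤ ‖p (q u)‖ * ‖u‖ := real_inner_le_norm _ _
  rw [ContinuousLinearMap.coe_coe]
  rcases (norm_nonneg (q u)).eq_or_lt with h0 | hpos
  · rw [← h0]
    simp
  refine le_of_mul_le_mul_right ?_ (pow_pos hpos 2)
  calc c * ‖q u‖ ^ 2 * ‖q u‖ ^ 2 = c * (‖q u‖ ^ 2) ^ 2 := by ring
    _ ≤ c * (‖p (q u)‖ * ‖u‖) ^ 2 := by gcongr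
    _ = ‖p (q u)‖ ^ 2 * (c * ‖u‖ ^ 2) := by ring
    _ ≤ ‖p (q u)‖ ^ 2 * ‖q u‖ ^ 2 := by gcongr

theorem norm_mul_one_sub_le [FiniteDimensional ℝ E]
    (hp : IsStarProjection p) (hq : IsStarProjection q)
    (hrank : finrank ℝ p.range = finrank ℝ q.range) :
    ‖q * (1 - p)‖ ≤ ‖p * (1 - q)‖ := by
  set x := ‖p * (1 - q)‖
  have hx : 0 ≤ x := norm_nonneg _
  rcases le_or_gt 1 x with hx1 | hx1
  · calc ‖q * (1 - p)‖ ≤ ‖q‖ * ‖1 - p‖ := norm_mul_le _ _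
      _ ≤ 1 * 1 := by
        gcongr
        exacts [hq.norm_le, hp.one_sub.norm_le]
      _ ≤ x := by rwa [one_mul]
  have hpq : ∀ u ∈ p.range, (1 - x ^ 2) * ‖u‖ ^ 2 ≤ ‖q u‖ ^ 2 := by
    intro u hu
    refine (hq.norm_sub_apply_le_iff u hx).mp ?_
    calc ‖u - q u‖ = ‖((1 - q) * p) u‖ := by simp [hp.apply_eq_self_of_mem_range hu]
      _ ≤ ‖(1 - q) * p‖ * ‖u‖ := ContinuousLinearMap.le_opNorm _ _
      _ = x * ‖u‖ := by rw [hq.one_sub.isSelfAdjoint.norm_mul_comm hp.isSelfAdjoint]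
  rw [hq.isSelfAdjoint.norm_mul_comm hp.one_sub.isSelfAdjoint]
  refine ContinuousLinearMap.opNorm_le_bound _ hx fun z => ?_
  have hqp := hp.mul_norm_sq_le_of_finrank_range_eq hq hrank (by nlinarith) hpq
    (LinearMap.mem_range_self _ z)
  calc ‖((1 - p) * q) z‖ = ‖q z - p (q z)‖ := by simp
    _ ≤ x * ‖q z‖ := (hp.norm_sub_apply_le_iff _ hx).mpr hqp
    _ ≤ x * ‖z‖ := by
      gcongr
      simpa using (q.le_opNorm z).trans (mul_le_of_le_one_left (norm_nonneg z) hq.norm_le)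

end IsStarProjection

open scoped Matrix.Norms.L2Operator

namespace Matrix

variable {ι : Type*} [Fintype ι] [DecidableEq ι]

theorem finrank_range_toEuclideanCLM (A : Matrix ι ι ℝ) :
    finrank ℝ (toEuclideanCLM (𝕜 := ℝ) A).range = A.rank := by
  rw [coe_toEuclideanCLM_eq_toEuclideanLin, toEuclideanLin_eq_toLin_orthonormal,
    ← rank_eq_finrank_range_toLin]

theorem l2_opNorm_mul_one_sub_le {U V : Matrix ι ι ℝ} (hU : IsStarProjection U)
    (hV : IsStarProjection V) (hrank : U.rank = V.rank) : ‖V * (1 - U)‖ ≤ ‖U * (1 - V)‖ := by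
  simp only [← l2_opNorm_toEuclideanCLM, map_mul, map_sub, map_one]
  refine (hU.map _).norm_mul_one_sub_le (hV.map _) ?_
  rw [finrank_range_toEuclideanCLM, finrank_range_toEuclideanCLM, hrank]

theorem l2_opNorm_transpose {m n : Type*} [Fintype m] [Fintype n] [DecidableEq m] [DecidableEq n]
    (A : Matrix m n ℝ) : ‖Aᵀ‖ = ‖A‖ := by
  rw [← conjTranspose_eq_transpose_of_trivial, l2_opNorm_conjTranspose]

end Matrix

namespace IsMPInv

variable {m n : ℕ} {A B : Matrix (Fin m) (Fin n) ℝ} {G H : Matrix (Fin n) (Fin m) ℝ}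

theorem transpose (h : IsMPInv A G) : IsMPInv Aᵀ Gᵀ := by
  obtain ⟨h₁, h₂, h₃, h₄⟩ := h
  refine ⟨?_, ?_, ?_, ?_⟩
  · rw [← transpose_mul, ← transpose_mul, ← Matrix.mul_assoc, h₁]
  · rw [← transpose_mul, ← transpose_mul, ← Matrix.mul_assoc, h₂]
  · rw [← transpose_mul, transpose_transpose, h₄]
  · rw [← transpose_mul, transpose_transpose, h₃]

theorem isStarProjection_mul_inv (h : IsMPInv A G) : IsStarProjection (A * G) where
  isIdempotentElem := by rw [IsIdempotentElem, ← Matrix.mul_assoc, h.1]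
  isSelfAdjoint := by
    rw [IsSelfAdjoint, star_eq_conjTranspose, conjTranspose_eq_transpose_of_trivial, h.2.2.1]

theorem rank_mul_inv (h : IsMPInv A G) : (A * G).rank = A.rank :=
  le_antisymm (rank_mul_le_left A G) <| by
    calc A.rank = (A * G * A).rank := by rw [h.1]
      _ ≤ (A * G).rank := rank_mul_le_left _ _

theorem l2_opNorm_inv_mul_one_sub_le (hA : IsMPInv A G) (hB : IsMPInv B H)
    (hrank : A.rank = B.rank) : ‖H * (1 - A * G)‖ ≤ ‖H‖ * ‖A - B‖ * ‖G‖ := by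
  have hBB : (1 - B * H) * B = 0 := by rw [Matrix.sub_mul, Matrix.one_mul, hB.1, sub_self]
  calc ‖H * (1 - A * G)‖ = ‖H * (B * H * (1 - A * G))‖ := by
        rw [← Matrix.mul_assoc, ← Matrix.mul_assoc, hB.2.1]
    _ ≤ ‖H‖ * ‖B * H * (1 - A * G)‖ := l2_opNorm_mul _ _
    _ ≤ ‖H‖ * ‖A * G * (1 - B * H)‖ := by
        gcongr
        refine Matrix.l2_opNorm_mul_one_sub_le hA.isStarProjection_mul_inv
          hB.isStarProjection_mul_inv ?_
        rw [hA.rank_mul_inv, hB.rank_mul_inv, hrank]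
    _ = ‖H‖ * ‖(1 - B * H) * (A - B) * G‖ := by
        rw [hA.isStarProjection_mul_inv.isSelfAdjoint.norm_mul_comm
          hB.isStarProjection_mul_inv.one_sub.isSelfAdjoint, Matrix.mul_sub, hBB, sub_zero,
          Matrix.mul_assoc]
    _ ≤ ‖H‖ * (‖1 - B * H‖ * ‖A - B‖ * ‖G‖) := by
        gcongr
        exact (l2_opNorm_mul _ _).trans (by gcongr; exact l2_opNorm_mul _ _)
    _ ≤ ‖H‖ * (1 * ‖A - B‖ * ‖G‖) := by
        gcongr
        exact hB.isStarProjection_mul_inv.one_sub.norm_le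
    _ = ‖H‖ * ‖A - B‖ * ‖G‖ := by ring

theorem l2_opNorm_sub_le (hA : IsMPInv A G) (hB : IsMPInv B H) (hrank : A.rank = B.rank) :
    ‖G - H‖ ≤ 3 * ‖G‖ * ‖H‖ * ‖A - B‖ := by
  have hsplit : G - H = H * (B - A) * G - H * (1 - A * G) + (1 - H * B) * G := by
    simp only [Matrix.mul_sub, Matrix.sub_mul, Matrix.mul_one, Matrix.one_mul, Matrix.mul_assoc]
    abel
  have hfirst : ‖H * (B - A) * G‖ ≤ ‖H‖ * ‖A - B‖ * ‖G‖ := by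
    rw [← norm_neg (A - B), neg_sub]
    exact (l2_opNorm_mul _ _).trans (by gcongr; exact l2_opNorm_mul _ _)
  have hthird : ‖(1 - H * B) * G‖ ≤ ‖G‖ * ‖B - A‖ * ‖H‖ := by
    have := hB.transpose.l2_opNorm_inv_mul_one_sub_le hA.transpose
      (by simp only [rank_transpose, hrank])
    rw [← l2_opNorm_transpose, transpose_mul, transpose_sub, transpose_one, transpose_mul]
    simpa only [← transpose_sub, l2_opNorm_transpose] using this
  have hsecond := hA.l2_opNorm_inv_mul_one_sub_le hB hrank
  rw [norm_sub_rev B A] at hthird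
  calc ‖G - H‖ ≤ ‖H * (B - A) * G‖ + ‖H * (1 - A * G)‖ + ‖(1 - H * B) * G‖ := by
        rw [hsplit]
        exact (norm_add_le _ _).trans (by gcongr; exact norm_sub_le _ _)
    _ ≤ 3 * ‖G‖ * ‖H‖ * ‖A - B‖ := by linarith

end IsMPInv

theorem specNorm_eq_l2_opNorm {m n : ℕ} (A : Matrix (Fin m) (Fin n) ℝ) : specNorm A = ‖A‖ := rfl

theorem stmt7 {m n r : ℕ} (Astar Ahat P : Matrix (Fin m) (Fin n) ℝ)
    (hA : Astar.rank = r) (hP : P.rank = r)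
    (hbest : ∀ M : Matrix (Fin m) (Fin n) ℝ, M.rank ≤ r →
      specNorm (Ahat - P) ≤ specNorm (Ahat - M))
    (Ad : Matrix (Fin n) (Fin m) ℝ) (hAd : IsMPInv Astar Ad)
    (Pd : Matrix (Fin n) (Fin m) ℝ) (hPd : IsMPInv P Pd) :
    specNorm (Ad - Pd) ≤ 6 * specNorm Ad * specNorm Pd * specNorm (Astar - Ahat) := by
  simp only [specNorm_eq_l2_opNorm] at hbest ⊢
  have hclose : ‖Astar - P‖ ≤ 2 * ‖Astar - Ahat‖ :=
    calc ‖Astar - P‖ ≤ ‖Astar - Ahat‖ + ‖Ahat - P‖ := norm_sub_le_norm_sub_add_norm_sub _ _ _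
      _ ≤ ‖Astar - Ahat‖ + ‖Ahat - Astar‖ := by gcongr; exact hbest Astar hA.le
      _ = 2 * ‖Astar - Ahat‖ := by rw [norm_sub_rev Ahat]; ring
  calc ‖Ad - Pd‖ ≤ 3 * ‖Ad‖ * ‖Pd‖ * ‖Astar - P‖ := hAd.l2_opNorm_sub_le hPd (hA.trans hP.symm)
    _ ≤ 3 * ‖Ad‖ * ‖Pd‖ * (2 * ‖Astar - Ahat‖) := by gcongr
    _ = 6 * ‖Ad‖ * ‖Pd‖ * ‖Astar - Ahat‖ := by ring
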